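/- Let s, r > 0, k ∈ (0,1), and let (x(t), y(t)) be a solution of ẋ = s x(1-x)(x-y), ẏ = (r/s)(x-k) with x(t) ∈ (0,1). Define L(x,y) = (s/(2r))(y-k)² - (k/s)log x - ((1-k)/s)log(1-x) + c₀. Then d/dt L(x(t), y(t)) = (x(t) - k)² ≥ 0. -/

import Mathlib

/-!
Along the flow, the quadratic term of `L` changes at rate `(y - k)(x - k)`, while the logarithmic
term, whose `x`-derivative is `(x - k) / (s x (1 - x))`, changes at rate `(x - k)(x - y)`, since
the factor `x (1 - x)` of the replicator equation cancels. The two rates add up to `(x - k)²`.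
-/

open Real

theorem hasDerivAt_mul_log_add_mul_log_one_sub {x : ℝ → ℝ} {x' t : ℝ} (k : ℝ)
    (hx : HasDerivAt x x' t) (hxt : x t ∈ Set.Ioo (0 : ℝ) 1) :
    HasDerivAt (fun u => k * log (x u) + (1 - k) * log (1 - x u))
      ((k - x t) / (x t * (1 - x t)) * x') t := by
  have hx0 : x t ≠ 0 := hxt.1.ne'
  have hx1 : 1 - x t ≠ 0 := (sub_pos.2 hxt.2).ne'
  refine (((hx.log hx0).const_mul k).add
    (((hx.const_sub 1).log hx1).const_mul (1 - k))).congr_deriv ?_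
  field_simp
  ring

theorem stmt_13_general (s r k : ℝ) (hs : 0 < s) (hr : 0 < r)
    (x y : ℝ → ℝ)
    (hx' : ∀ t, HasDerivAt x (s * x t * (1 - x t) * (x t - y t)) t)
    (hy' : ∀ t, HasDerivAt y ((r / s) * (x t - k)) t)
    (hx01 : ∀ t, x t ∈ Set.Ioo (0:ℝ) 1)
    (L : ℝ → ℝ → ℝ)
    (hL : ∀ a b, L a b = (s / (2 * r)) * (b - k) ^ 2 - (k / s) * Real.log a
      - ((1 - k) / s) * Real.log (1 - a)
      + ((k / s) * Real.log k + ((1 - k) / s) * Real.log (1 - k))) :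
    ∀ t, HasDerivAt (fun u => L (x u) (y u)) ((x t - k) ^ 2) t ∧ 0 ≤ (x t - k) ^ 2 := by
  intro t
  refine ⟨?_, sq_nonneg _⟩
  set c₀ := (k / s) * log k + ((1 - k) / s) * log (1 - k)
  have hL_along : (fun u => L (x u) (y u)) = fun u => (s / (2 * r)) * (y u - k) ^ 2
      - (k * log (x u) + (1 - k) * log (1 - x u)) / s + c₀ := by
    funext u
    rw [hL]
    ring
  have hquad := (((hy' t).sub_const k).fun_pow 2).const_mul (s / (2 * r))
  have hlog := hasDerivAt_mul_log_add_mul_log_one_sub k (hx' t) (hx01 t)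
  have hx0 : x t ≠ 0 := (hx01 t).1.ne'
  have hx1 : 1 - x t ≠ 0 := (sub_pos.2 (hx01 t).2).ne'
  rw [hL_along]
  refine ((hquad.sub (hlog.div_const s)).add_const c₀).congr_deriv ?_
  field_simp
  ring

theorem stmt_13 (s r k : ℝ) (hs : 0 < s) (hr : 0 < r) (hk : k ∈ Set.Ioo (0:ℝ) 1)
    (x y : ℝ → ℝ)
    (hx' : ∀ t, HasDerivAt x (s * x t * (1 - x t) * (x t - y t)) t)
    (hy' : ∀ t, HasDerivAt y ((r / s) * (x t - k)) t)
    (hx01 : ∀ t, x t ∈ Set.Ioo (0:ℝ) 1)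
    (L : ℝ → ℝ → ℝ)
    (hL : ∀ a b, L a b = (s / (2 * r)) * (b - k) ^ 2 - (k / s) * Real.log a
      - ((1 - k) / s) * Real.log (1 - a)
      + ((k / s) * Real.log k + ((1 - k) / s) * Real.log (1 - k))) :
    ∀ t, HasDerivAt (fun u => L (x u) (y u)) ((x t - k) ^ 2) t ∧ 0 ≤ (x t - k) ^ 2 :=
  stmt_13_general s r k hs hr x y hx' hy' hx01 L hL
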